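/- If (w, g(w)) is an extreme point of epi(g), where g is the infimal convolution of polyhedral convex functions g¹,…,g^K, then w admits exactly one optimal decomposition (w^k) with Σ_k w^k = w and Σ_k g^k(w^k) = g(w). -/

import Mathlib

noncomputable section
open Set

abbrev V (n : ℕ) := EuclideanSpace ℝ (Fin n)

def IsPolyhedron {E : Type*} [AddCommGroup E] [Module ℝ E] (P : Set E) : Prop :=
  ∃ (m : ℕ) (L : Fin m → E →ₗ[ℝ] ℝ) (b : Fin m → ℝ), P = {x | ∀ i, L i x ≤ b i}

def epi {n : ℕ} (g : V n → ℝ) : Set (V n × ℝ) := {p | g p.1 ≤ p.2}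

/-!
Two optimal decompositions of `w` average to a third one, and by convexity of the `g^k` the
average is optimal only if every `g^k` is affine on the segment between the corresponding
components. On the other hand, replacing one component of an optimal decomposition moves
`(w, g w)` by the same translation as the component's point of `epi (g^k)`, so extremality of
`(w, g w)` makes every component of an optimal decomposition an extreme point of its epigraph.
Applied to the average, the two decompositions must agree componentwise.
-/

theorem mem_extremePoints_of_add_mem_extremePoints {𝕜 E : Type*} [Ring 𝕜] [PartialOrder 𝕜]
    [IsOrderedRing 𝕜] [AddCommGroup E] [Module 𝕜 E] {A B : Set E} {c x : E}
    (hAB : ∀ y ∈ A, c + y ∈ B) (hx : x ∈ A) (hcx : c + x ∈ B.extremePoints 𝕜) :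
    x ∈ A.extremePoints 𝕜 :=
  ⟨hx, fun _ hy₁ _ hy₂ hseg =>
    add_left_cancel (hcx.2 (hAB _ hy₁) (hAB _ hy₂) ((mem_openSegment_translate 𝕜 c).2 hseg))⟩

theorem Fintype.sum_apply_update {ι E M : Type*} [Fintype ι] [DecidableEq ι] [AddCommGroup M]
    (F : ι → E → M) (W : ι → E) (k : ι) (u : E) :
    ∑ j, F j (Function.update W k u j) = ∑ j, F j (W j) - F k (W k) + F k u := by
  simp only [Function.apply_update F,
    Finset.sum_update_of_mem (Finset.mem_univ k), Finset.sum_eq_add_sum_sdiff_singleton_of_mem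
      (Finset.mem_univ k) (fun j => F j (W j))]
  abel

section InfConvolution

variable {ι : Type*} [Fintype ι]

def IsOptimalDecomp {E : Type*} [AddCommGroup E] (f : ι → E → ℝ) (g : E → ℝ) (w : E)
    (W : ι → E) : Prop :=
  ∑ k, W k = w ∧ ∑ k, f k (W k) = g w

theorem IsOptimalDecomp.convexCombination {E : Type*} [AddCommGroup E] [Module ℝ E]
    {f : ι → E → ℝ} {g : E → ℝ} {w : E} {Wa Wb : ι → E}
    (hconv : ∀ k, ConvexOn ℝ univ (f k)) (hle : ∀ W : ι → E, g (∑ k, W k) ≤ ∑ k, f k (W k))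
    (ha : IsOptimalDecomp f g w Wa) (hb : IsOptimalDecomp f g w Wb)
    {a b : ℝ} (ha₀ : 0 ≤ a) (hb₀ : 0 ≤ b) (hab : a + b = 1) :
    IsOptimalDecomp f g w (a • Wa + b • Wb) ∧
      ∀ k, f k (a • Wa k + b • Wb k) = a * f k (Wa k) + b * f k (Wb k) := by
  have hsum : ∑ k, (a • Wa + b • Wb) k = w := by
    simp only [Pi.add_apply, Pi.smul_apply, Finset.sum_add_distrib, ← Finset.smul_sum,
      ha.1, hb.1, ← add_smul, hab, one_smul]
  have hpoint : ∀ k, f k (a • Wa k + b • Wb k) ≤ a * f k (Wa k) + b * f k (Wb k) :=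
    fun k => (hconv k).2 (mem_univ _) (mem_univ _) ha₀ hb₀ hab
  have hmix : ∑ k, (a * f k (Wa k) + b * f k (Wb k)) = g w := by
    rw [Finset.sum_add_distrib, ← Finset.mul_sum, ← Finset.mul_sum, ha.2, hb.2, ← add_mul,
      hab, one_mul]
  have hlow : g w ≤ ∑ k, f k (a • Wa k + b • Wb k) := hsum ▸ hle (a • Wa + b • Wb)
  have hval : ∑ k, f k (a • Wa k + b • Wb k) = g w :=
    le_antisymm (hmix ▸ Finset.sum_le_sum fun k _ => hpoint k) hlow
  refine ⟨⟨hsum, hval⟩, fun k => ?_⟩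
  exact (Finset.sum_eq_sum_iff_of_le fun k _ => hpoint k).1 (hval.trans hmix.symm) k
    (Finset.mem_univ k)

variable {n : ℕ} {f : ι → V n → ℝ} {g : V n → ℝ} {w : V n}

theorem mk_mem_epi (h : V n → ℝ) (x : V n) : (x, h x) ∈ epi h := le_refl (h x)

theorem IsOptimalDecomp.mem_extremePoints_epi [DecidableEq ι]
    (hle : ∀ W : ι → V n, g (∑ k, W k) ≤ ∑ k, f k (W k))
    (hext : (w, g w) ∈ extremePoints ℝ (epi g)) {W : ι → V n} (hW : IsOptimalDecomp f g w W)
    (k : ι) : (W k, f k (W k)) ∈ extremePoints ℝ (epi (f k)) := by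
  let c : V n × ℝ := (w - W k, g w - f k (W k))
  have hc : c + (W k, f k (W k)) = (w, g w) := Prod.ext (sub_add_cancel _ _) (sub_add_cancel _ _)
  refine mem_extremePoints_of_add_mem_extremePoints (B := epi g) ?_ (mk_mem_epi _ _) (hc ▸ hext)
  rintro ⟨u, s⟩ (hu : f k u ≤ s)
  have hsum := Fintype.sum_apply_update (fun _ => (id : V n → V n)) W k u
  simp only [id, hW.1] at hsum
  have h := hle (Function.update W k u)
  rw [hsum, Fintype.sum_apply_update f, hW.2] at h
  change g (w - W k + u) ≤ g w - f k (W k) + s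
  linarith

theorem IsOptimalDecomp.eq_of_mem_extremePoints
    (hconv : ∀ k, ConvexOn ℝ univ (f k)) (hle : ∀ W : ι → V n, g (∑ k, W k) ≤ ∑ k, f k (W k))
    (hext : (w, g w) ∈ extremePoints ℝ (epi g)) {Wa Wb : ι → V n}
    (ha : IsOptimalDecomp f g w Wa) (hb : IsOptimalDecomp f g w Wb) : Wa = Wb := by
  classical
  obtain ⟨hM, hMk⟩ := ha.convexCombination hconv hle hb (a := 2⁻¹) (b := 2⁻¹)
    (by norm_num) (by norm_num) (by norm_num)
  funext k
  have hseg : ((2⁻¹ : ℝ) • Wa k + (2⁻¹ : ℝ) • Wb k, f k ((2⁻¹ : ℝ) • Wa k + (2⁻¹ : ℝ) • Wb k))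
      ∈ openSegment ℝ (Wa k, f k (Wa k)) (Wb k, f k (Wb k)) :=
    ⟨2⁻¹, 2⁻¹, by norm_num, by norm_num, by norm_num, Prod.ext rfl (hMk k).symm⟩
  obtain ⟨hak, hbk⟩ := (mem_extremePoints.1 (hM.mem_extremePoints_epi hle hext k)).2 _
    (mk_mem_epi _ _) _ (mk_mem_epi _ _) hseg
  exact (congrArg Prod.fst hak).trans (congrArg Prod.fst hbk).symm

end InfConvolution

theorem stmt13_general (n K : ℕ) (gk : Fin K → V n → ℝ)
    (hconv : ∀ k, ConvexOn ℝ univ (gk k))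
    (g : V n → ℝ)
    (hg : ∀ w : V n, IsLeast
      {s | ∃ W : Fin K → V n, (∑ k, W k) = w ∧ s = ∑ k, gk k (W k)} (g w))
    (w : V n)
    (hext : (w, g w) ∈ Set.extremePoints ℝ (epi g)) :
    ∃! W : Fin K → V n, (∑ k, W k) = w ∧ (∑ k, gk k (W k)) = g w := by
  have hle : ∀ W : Fin K → V n, g (∑ k, W k) ≤ ∑ k, gk k (W k) :=
    fun W => (hg _).2 ⟨W, rfl, rfl⟩
  obtain ⟨W₀, hsum, hval⟩ := (hg w).1
  refine ⟨W₀, ⟨hsum, hval.symm⟩, fun W hW => ?_⟩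
  exact IsOptimalDecomp.eq_of_mem_extremePoints hconv hle hext hW ⟨hsum, hval.symm⟩

/-- if `(w, g w)` is an extreme point of `epi g`, `g` the
(attained) infimal convolution of polyhedral convex `g^k`, then `w` has exactly
one optimal decomposition. -/
theorem stmt13 (n K : ℕ) (gk : Fin K → V n → ℝ)
    (hconv : ∀ k, ConvexOn ℝ univ (gk k))
    (hpoly : ∀ k, IsPolyhedron (epi (gk k)))
    (g : V n → ℝ)
    (hg : ∀ w : V n, IsLeast
      {s | ∃ W : Fin K → V n, (∑ k, W k) = w ∧ s = ∑ k, gk k (W k)} (g w))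
    (w : V n)
    (hext : (w, g w) ∈ Set.extremePoints ℝ (epi g)) :
    ∃! W : Fin K → V n, (∑ k, W k) = w ∧ (∑ k, gk k (W k)) = g w :=
  stmt13_general n K gk hconv g hg w hext
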